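/- Let G be a graph with isolated vertices such that G ≠ G̃ (i.e., G has twins). Then for every t ≥ 1, the twin quotient of μ_t(G) satisfies μ_t(G̃) = (μ_t(G))~ + (t−1)·K_1. -/

import Mathlib

open SimpleGraph

/-- The generalized Mycielskian `μ_t(G)`: vertices are `some (s, i)` for levels
`0 ≤ s ≤ t` (level `0` being the original vertices) plus a root `none`. -/
def Mycielskian {V : Type*} (G : SimpleGraph V) (t : ℕ) :
    SimpleGraph (Option (Fin (t + 1) × V)) where
  Adj x y :=
    match x, y with
    | none, none => False
    | none, some (s, _) => s.val = t
    | some (s, _), none => s.val = t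
    | some (s, i), some (r, j) =>
        G.Adj i j ∧ ((s.val = 0 ∧ r.val = 0) ∨ s.val + 1 = r.val ∨ r.val + 1 = s.val)
  symm := by
    constructor
    rintro (_ | ⟨s, i⟩) (_ | ⟨r, j⟩) h
    · exact h
    · exact h
    · exact h
    · exact ⟨h.1.symm, by tauto⟩
  loopless := by
    constructor
    rintro (_ | ⟨s, i⟩) h
    · exact h
    · exact G.loopless.irrefl i h.1

/-- `S` is a determining set for `G`: the only automorphism fixing `S` pointwise
is the identity. -/
def IsDetermining {V : Type*} (G : SimpleGraph V) (S : Set V) : Prop :=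
  ∀ φ : G ≃g G, (∀ v ∈ S, φ v = v) → ∀ v, φ v = v

/-- The determining number of `G`. -/
noncomputable def detNum {V : Type*} (G : SimpleGraph V) : ℕ :=
  sInf {n | ∃ S : Finset V, S.card = n ∧ IsDetermining G ↑S}

/-- A coloring is distinguishing if no nontrivial automorphism preserves all
color classes. -/
def IsDistinguishing {V : Type*} (G : SimpleGraph V) {C : Type*} (c : V → C) : Prop :=
  ∀ φ : G ≃g G, (∀ v, c (φ v) = c v) → ∀ v, φ v = v

/-- The distinguishing number of `G`. -/
noncomputable def distNum {V : Type*} (G : SimpleGraph V) : ℕ :=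
  sInf {d | ∃ c : V → Fin d, IsDistinguishing G c}

/-- The cost of 2-distinguishing: the minimum size of a color class over all
2-distinguishing colorings. -/
noncomputable def cost2 {V : Type*} (G : SimpleGraph V) [Fintype V] : ℕ :=
  sInf {n | ∃ c : V → Bool, IsDistinguishing G c ∧
    n = (Finset.univ.filter fun v => c v = true).card}

/-- The twin equivalence relation: equal open neighborhoods. -/
def twinSetoid {V : Type*} (G : SimpleGraph V) : Setoid V where
  r x y := G.neighborSet x = G.neighborSet y
  iseqv := ⟨fun _ => rfl, Eq.symm, Eq.trans⟩

/-- The twin quotient graph `G̃`. -/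
def twinQuotient {V : Type*} (G : SimpleGraph V) :
    SimpleGraph (Quotient (twinSetoid G)) where
  Adj a b := ∃ p q : V, Quotient.mk (twinSetoid G) p = a ∧
    Quotient.mk (twinSetoid G) q = b ∧ G.Adj p q
  symm := by constructor; rintro a b ⟨p, q, hp, hq, h⟩; exact ⟨q, p, hq, hp, h.symm⟩
  loopless := by
    constructor
    rintro a ⟨p, q, rfl, hq, h⟩
    have htw : G.neighborSet q = G.neighborSet p := Quotient.exact hq
    have hmem : q ∈ G.neighborSet p := h
    rw [← htw] at hmem
    exact G.loopless.irrefl q hmem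

/-- A twin cover: contains at least one of every pair of distinct twins. -/
def IsTwinCover {V : Type*} (G : SimpleGraph V) (T : Set V) : Prop :=
  ∀ x y : V, x ≠ y → G.neighborSet x = G.neighborSet y → x ∈ T ∨ y ∈ T

/-- A minimum twin cover. -/
def IsMinTwinCover {V : Type*} (G : SimpleGraph V) (T : Set V) : Prop :=
  IsTwinCover G T ∧ ∀ T' : Set V, IsTwinCover G T' → T.ncard ≤ T'.ncard

/-- Attach `ℓ` pendant vertices to the vertex `w` of `G`. -/
def attachPendants {V : Type*} (G : SimpleGraph V) (w : V) (ℓ : ℕ) :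
    SimpleGraph (V ⊕ Fin ℓ) where
  Adj x y :=
    match x, y with
    | Sum.inl a, Sum.inl b => G.Adj a b
    | Sum.inl a, Sum.inr _ => a = w
    | Sum.inr _, Sum.inl b => b = w
    | Sum.inr _, Sum.inr _ => False
  symm := by constructor; rintro (a | a) (b | b) h <;> simp_all <;> exact h.symm
  loopless := by constructor; rintro (a | a) h <;> simp_all

/-!
Twins of `μ_t(G)` are the pairs of vertices on a common level whose projections are twins in
`G`, together with all pairs of isolated vertices of `G` placed below the top level, which are
isolated in `μ_t(G)`. So `(s, i) ↦ (s, [i])`, with isolated vertices below the top moved down to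
level `0`, identifies exactly the twins of `μ_t(G)` and preserves adjacency: it embeds
`(μ_t(G))~` into `μ_t(G̃)`. The vertices it misses are the copies of the isolated class of `G̃` on
levels `1, …, t - 1`, which are isolated.
-/

section TwinQuotient

variable {V W : Type*} {G : SimpleGraph V}

theorem twinQuotient_adj_mk {a b : V} :
    (twinQuotient G).Adj (Quotient.mk _ a) (Quotient.mk _ b) ↔ G.Adj a b := by
  refine ⟨?_, fun h => ⟨a, b, rfl, rfl, h⟩⟩
  rintro ⟨p, q, hp, hq, h⟩
  have hpa : G.neighborSet p = G.neighborSet a := Quotient.exact hp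
  have hqb : G.neighborSet q = G.neighborSet b := Quotient.exact hq
  exact ((Set.ext_iff.mp hqb a).mp ((Set.ext_iff.mp hpa q).mp h).symm).symm

theorem twinQuotient_not_adj_mk_of_isolated {v : V} (hv : ∀ u, ¬ G.Adj v u)
    (c : Quotient (twinSetoid G)) : ¬ (twinQuotient G).Adj (Quotient.mk _ v) c := by
  induction c using Quotient.inductionOn with
  | h u => exact fun h => hv u (twinQuotient_adj_mk.mp h)

def twinQuotientEmbedding {H : SimpleGraph W} (f : V → W)
    (hf : ∀ x y, f x = f y ↔ G.neighborSet x = G.neighborSet y)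
    (hadj : ∀ x y, H.Adj (f x) (f y) ↔ G.Adj x y) : twinQuotient G ↪g H where
  toFun := Quotient.lift f fun x y h => (hf x y).mpr h
  inj' := by
    intro a b
    induction a, b using Quotient.inductionOn₂ with
    | h x y => exact fun h => Quotient.sound ((hf x y).mp h)
  map_rel_iff' := by
    intro a b
    induction a, b using Quotient.inductionOn₂ with
    | h x y => exact (hadj x y).trans twinQuotient_adj_mk.symm

end TwinQuotient

noncomputable def SimpleGraph.Iso.sumBotOfIsolated {V W β : Type*} {G : SimpleGraph V}
    {H : SimpleGraph W}
    (e : G ↪g H) (g : β → W) (hg : Function.Injective g) (hiso : ∀ b w, ¬ H.Adj (g b) w)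
    (hdisj : ∀ v b, e v ≠ g b) (hcover : ∀ w, (∃ v, e v = w) ∨ ∃ b, g b = w) :
    G ⊕g (⊥ : SimpleGraph β) ≃g H where
  toEquiv := Equiv.ofBijective (Sum.elim e g) ⟨e.injective.sumElim hg hdisj, fun w =>
    (hcover w).elim (fun ⟨v, hv⟩ => ⟨.inl v, hv⟩) (fun ⟨b, hb⟩ => ⟨.inr b, hb⟩)⟩
  map_rel_iff' := by
    rintro (a | a) (b | b)
    · exact e.map_adj_iff
    · exact iff_of_false (fun h => hiso b _ h.symm) (not_adj_sum_inl_inr a b)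
    · exact iff_of_false (hiso a _) (fun h => not_adj_sum_inl_inr b a h.symm)
    · exact iff_of_false (hiso a _) (fun h => (sum_adj_inr.mp h).elim)

section Mycielskian

variable {V : Type*} {G : SimpleGraph V} {t : ℕ}

theorem mycielskian_not_adj_of_isolated {s : Fin (t + 1)} {i : V} (hs : s.val < t)
    (hi : ∀ u, ¬ G.Adj i u) (w : Option (Fin (t + 1) × V)) :
    ¬ (Mycielskian G t).Adj (some (s, i)) w := by
  rcases w with _ | ⟨r, u⟩
  · exact hs.ne
  · exact fun h => hi u h.1

theorem mycielskian_exists_adj_of_adj (s : Fin (t + 1)) {i u : V} (h : G.Adj i u) :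
    ∃ k, (Mycielskian G t).Adj (some (s, i)) (some (k, u)) := by
  by_cases hs : s.val = 0
  · exact ⟨0, h, Or.inl ⟨hs, rfl⟩⟩
  · exact ⟨⟨s.val - 1, by omega⟩, h, Or.inr (Or.inr (by simp only; omega))⟩

theorem mycielskian_neighborSet_none_ne (s : Fin (t + 1)) (i : V) :
    (Mycielskian G t).neighborSet none ≠ (Mycielskian G t).neighborSet (some (s, i)) := by
  intro h
  have htop : some (Fin.last t, i) ∈ (Mycielskian G t).neighborSet none := rfl
  rw [h] at htop
  exact G.loopless.irrefl i htop.1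

theorem mycielskian_neighborSet_some_eq_iff (s r : Fin (t + 1)) (i j : V) :
    (Mycielskian G t).neighborSet (some (s, i)) = (Mycielskian G t).neighborSet (some (r, j)) ↔
      G.neighborSet i = G.neighborSet j ∧
        (s = r ∨ (s.val < t ∧ r.val < t ∧ ∀ u, ¬ G.Adj i u)) := by
  constructor
  · intro h
    have hadj : ∀ w, (Mycielskian G t).Adj (some (s, i)) w ↔
        (Mycielskian G t).Adj (some (r, j)) w := fun w => Set.ext_iff.mp h w
    have hroot : s.val = t ↔ r.val = t := hadj none
    have hN : G.neighborSet i = G.neighborSet j := by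
      ext u
      constructor
      · intro hu
        obtain ⟨k, hk⟩ := mycielskian_exists_adj_of_adj s hu
        exact ((hadj _).mp hk).1
      · intro hu
        obtain ⟨k, hk⟩ := mycielskian_exists_adj_of_adj r hu
        exact ((hadj _).mpr hk).1
    refine ⟨hN, ?_⟩
    by_cases hst : s.val = t
    · exact Or.inl (Fin.ext (hst.trans (hroot.mp hst).symm))
    by_cases hi : ∀ u, ¬ G.Adj i u
    · exact Or.inr ⟨by omega, by omega, hi⟩
    obtain ⟨u, hu⟩ := not_forall_not.mp hi
    have hu' : G.Adj j u := (Set.ext_iff.mp hN u).mp hu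
    -- both vertices see `u` one level up, and the levels adjacent to that one pin down `s = r`
    have hs := ((hadj (some (⟨s.val + 1, by omega⟩, u))).mp ⟨hu, Or.inr (Or.inl rfl)⟩).2
    have hr := ((hadj (some (⟨r.val + 1, by omega⟩, u))).mpr ⟨hu', Or.inr (Or.inl rfl)⟩).2
    simp only at hs hr
    exact Or.inl (Fin.ext (by omega))
  · rintro ⟨hN, rfl | ⟨hs, hr, hi⟩⟩
    · ext (_ | ⟨k, u⟩)
      · rfl
      · exact and_congr (Set.ext_iff.mp hN u) Iff.rfl
    · have hj : ∀ u, ¬ G.Adj j u := fun u h => hi u ((Set.ext_iff.mp hN u).mpr h)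
      ext w
      exact iff_of_false (mycielskian_not_adj_of_isolated hs hi w)
        (mycielskian_not_adj_of_isolated hr hj w)

open Classical in
/-- Isolated vertices of `G` below the top level are isolated in `μ_t(G)`, hence all twins
there; they are moved to level `0`. -/
noncomputable def normalLevel (G : SimpleGraph V) (t : ℕ) (s : Fin (t + 1)) (i : V) :
    Fin (t + 1) :=
  if s.val < t ∧ ∀ u, ¬ G.Adj i u then 0 else s

theorem normalLevel_of_adj {s : Fin (t + 1)} {i u : V} (h : G.Adj i u) :
    normalLevel G t s i = s :=
  if_neg fun hs => hs.2 u h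

theorem normalLevel_val_of_isolated {s : Fin (t + 1)} {i : V} (hi : ∀ u, ¬ G.Adj i u) :
    (normalLevel G t s i).val = if s.val < t then 0 else s.val := by
  by_cases hs : s.val < t
  · rw [normalLevel, if_pos ⟨hs, hi⟩, if_pos hs, Fin.val_zero]
  · rw [normalLevel, if_neg fun h => hs h.1, if_neg hs]

theorem normalLevel_val_eq_iff (s : Fin (t + 1)) (i : V) :
    (normalLevel G t s i).val = t ↔ s.val = t := by
  unfold normalLevel
  split_ifs with h
  · simp only [Fin.val_zero]
    omega
  · rfl

theorem normalLevel_eq_iff {s r : Fin (t + 1)} {i j : V}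
    (hN : G.neighborSet i = G.neighborSet j) :
    normalLevel G t s i = normalLevel G t r j ↔
      s = r ∨ (s.val < t ∧ r.val < t ∧ ∀ u, ¬ G.Adj i u) := by
  have hij : (∀ u, ¬ G.Adj i u) ↔ ∀ u, ¬ G.Adj j u :=
    forall_congr' fun u => not_congr (Set.ext_iff.mp hN u)
  by_cases hi : ∀ u, ¬ G.Adj i u
  · rw [Fin.ext_iff, normalLevel_val_of_isolated hi, normalLevel_val_of_isolated (hij.mp hi),
      Fin.ext_iff, and_iff_left hi]
    split_ifs <;> omega
  · simp [normalLevel, hi, mt hij.mpr hi]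

noncomputable def mycielskianTwinMap (G : SimpleGraph V) (t : ℕ) :
    Option (Fin (t + 1) × V) → Option (Fin (t + 1) × Quotient (twinSetoid G)) :=
  Option.map fun p => (normalLevel G t p.1 p.2, Quotient.mk _ p.2)

theorem mycielskianTwinMap_eq_iff (x y : Option (Fin (t + 1) × V)) :
    mycielskianTwinMap G t x = mycielskianTwinMap G t y ↔
      (Mycielskian G t).neighborSet x = (Mycielskian G t).neighborSet y := by
  rcases x with _ | ⟨s, i⟩ <;> rcases y with _ | ⟨r, j⟩
  · simp [mycielskianTwinMap]
  · simpa [mycielskianTwinMap] using mycielskian_neighborSet_none_ne r j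
  · simpa [mycielskianTwinMap, eq_comm] using mycielskian_neighborSet_none_ne s i
  · simp only [mycielskianTwinMap, Option.map_some, Option.some_inj, Prod.mk.injEq,
      mycielskian_neighborSet_some_eq_iff, Quotient.eq]
    exact ⟨fun ⟨hl, hN⟩ => ⟨hN, (normalLevel_eq_iff hN).mp hl⟩,
      fun ⟨hN, hl⟩ => ⟨(normalLevel_eq_iff hN).mpr hl, hN⟩⟩

theorem mycielskianTwinMap_adj_iff (x y : Option (Fin (t + 1) × V)) :
    (Mycielskian (twinQuotient G) t).Adj (mycielskianTwinMap G t x) (mycielskianTwinMap G t y) ↔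
      (Mycielskian G t).Adj x y := by
  rcases x with _ | ⟨s, i⟩ <;> rcases y with _ | ⟨r, j⟩
  · exact Iff.rfl
  · exact normalLevel_val_eq_iff r j
  · exact normalLevel_val_eq_iff s i
  · refine (and_congr_left' twinQuotient_adj_mk).trans ⟨fun ⟨h, hl⟩ => ⟨h, ?_⟩,
      fun ⟨h, hl⟩ => ⟨h, ?_⟩⟩
    · rwa [normalLevel_of_adj h, normalLevel_of_adj h.symm] at hl
    · rwa [normalLevel_of_adj h, normalLevel_of_adj h.symm]

def isolatedShadow (G : SimpleGraph V) (t : ℕ) (v : V) (k : Fin (t - 1)) :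
    Option (Fin (t + 1) × Quotient (twinSetoid G)) :=
  some (⟨k.val + 1, by omega⟩, Quotient.mk _ v)

theorem isolatedShadow_injective (v : V) : Function.Injective (isolatedShadow G t v) := by
  intro k l h
  simp only [isolatedShadow, Option.some_inj, Prod.mk.injEq, Fin.mk.injEq] at h
  exact Fin.ext (by omega)

variable {v : V}

theorem not_adj_isolatedShadow (hv : ∀ u, ¬ G.Adj v u) (k : Fin (t - 1))
    (w : Option (Fin (t + 1) × Quotient (twinSetoid G))) :
    ¬ (Mycielskian (twinQuotient G) t).Adj (isolatedShadow G t v k) w :=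
  mycielskian_not_adj_of_isolated (by simp only; omega)
    (twinQuotient_not_adj_mk_of_isolated hv) w

theorem mycielskianTwinMap_ne_isolatedShadow (hv : ∀ u, ¬ G.Adj v u)
    (x : Option (Fin (t + 1) × V)) (k : Fin (t - 1)) :
    mycielskianTwinMap G t x ≠ isolatedShadow G t v k := by
  rcases x with _ | ⟨s, i⟩
  · simp [mycielskianTwinMap, isolatedShadow]
  intro h
  simp only [mycielskianTwinMap, isolatedShadow, Option.map_some, Option.some_inj,
    Prod.mk.injEq, Fin.ext_iff, Quotient.eq] at h
  obtain ⟨hl, hN⟩ := h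
  have hi : ∀ u, ¬ G.Adj i u := fun u h' => hv u ((Set.ext_iff.mp hN u).mp h')
  rw [normalLevel_val_of_isolated hi] at hl
  split_ifs at hl
  omega

theorem mycielskianTwinMap_or_isolatedShadow (hv : ∀ u, ¬ G.Adj v u)
    (w : Option (Fin (t + 1) × Quotient (twinSetoid G))) :
    (∃ x, mycielskianTwinMap G t x = w) ∨ ∃ k, isolatedShadow G t v k = w := by
  rcases w with _ | ⟨s, c⟩
  · exact Or.inl ⟨none, rfl⟩
  induction c using Quotient.inductionOn with | h i => ?_
  by_cases hs : 1 ≤ s.val ∧ s.val < t ∧ ∀ u, ¬ G.Adj i u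
  · refine Or.inr ⟨⟨s.val - 1, by omega⟩, ?_⟩
    have hN : G.neighborSet v = G.neighborSet i := by
      ext u
      exact iff_of_false (hv u) (hs.2.2 u)
    simp only [isolatedShadow, Option.some_inj, Prod.mk.injEq, Fin.ext_iff]
    exact ⟨by omega, Quotient.sound hN⟩
  · refine Or.inl ⟨some (s, i), ?_⟩
    simp only [mycielskianTwinMap, Option.map_some, Option.some_inj, Prod.mk.injEq, and_true]
    by_cases hi : ∀ u, ¬ G.Adj i u
    · have hs' : s.val < t → s.val = 0 := fun hst => by
        by_contra h0
        exact hs ⟨by omega, hst, hi⟩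
      rw [Fin.ext_iff, normalLevel_val_of_isolated hi]
      split_ifs with hst
      · exact (hs' hst).symm
      · rfl
    · obtain ⟨u, hu⟩ := not_forall_not.mp hi
      exact normalLevel_of_adj hu

end Mycielskian

theorem mycielskian_quotient_commute_general {V : Type*} (G : SimpleGraph V)
    (hiso : ∃ v : V, ∀ u : V, ¬ G.Adj v u)
    (t : ℕ) :
    Nonempty (Mycielskian (twinQuotient G) t ≃g
      (twinQuotient (Mycielskian G t) ⊕g (⊥ : SimpleGraph (Fin (t - 1))))) := by
  obtain ⟨v, hv⟩ := hiso
  exact ⟨(Iso.sumBotOfIsolated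
    (twinQuotientEmbedding (mycielskianTwinMap G t) mycielskianTwinMap_eq_iff
      mycielskianTwinMap_adj_iff)
    (isolatedShadow G t v) (isolatedShadow_injective v) (not_adj_isolatedShadow hv)
    (fun x => Quotient.inductionOn x (mycielskianTwinMap_ne_isolatedShadow hv))
    (fun w => (mycielskianTwinMap_or_isolatedShadow hv w).imp
      (fun ⟨x, hx⟩ => ⟨Quotient.mk _ x, hx⟩) id)).symm⟩

/-- for `G` with isolated vertices and twins,
`μ_t(G̃) = (μ_t(G))~ + (t−1)·K_1`. -/
theorem mycielskian_quotient_commute {V : Type*} [Fintype V] (G : SimpleGraph V)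
    (hiso : ∃ v : V, ∀ u : V, ¬ G.Adj v u)
    (htwin : ∃ x y : V, x ≠ y ∧ G.neighborSet x = G.neighborSet y)
    (t : ℕ) (ht : 1 ≤ t) :
    Nonempty (Mycielskian (twinQuotient G) t ≃g
      (twinQuotient (Mycielskian G t) ⊕g (⊥ : SimpleGraph (Fin (t - 1))))) :=
  mycielskian_quotient_commute_general G hiso t
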